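/- arXiv:2605.25295 — 4 statements merged into one kernel-verified Lean document; each statement's English description precedes it below -/
import Mathlib

section
/- The splitting probability integral converges to a Heaviside-type step function as n → ∞: for every fixed λ with 0 < λ < 1, lim_{n→∞} Sp(λ, n) = 1; for λ = 1, Sp(1, n) = 1/2 for every n; and for every fixed λ > 1, lim_{n→∞} Sp(λ, n) = 0. -/
/-!
With `c = π^(-1/2)` and `a_n = λ n^(1 - 1/λ²)` we have
`Sp(λ, n) = c ∫_0^∞ exp(-c (w + a_n w^(1/λ²))) dw`, and the integrands are dominated by
`exp(-c w)`, whose integral is `1/c`. For `λ < 1` the exponent `1 - 1/λ²` is negative, so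
`a_n → 0` and dominated convergence gives the limit `c · (1/c) = 1`; for `λ > 1` it is positive,
so `a_n → ∞`, the integrands tend to `0` pointwise and so does `Sp`. For `λ = 1` the integrand
is exactly `exp(-2cw)`, with integral `1/(2c)`.
-/

open MeasureTheory Filter

/-- The splitting probability integral
`Sp(λ, n) = π^(-1/2) ∫_0^∞ exp(-π^(-1/2) (w + λ n^(1 - 1/λ²) w^(1/λ²))) dw`. -/
noncomputable def Sp (l : ℝ) (n : ℕ) : ℝ :=
  (Real.sqrt Real.pi)⁻¹ *
    ∫ w in Set.Ioi (0 : ℝ),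
      Real.exp (-(Real.sqrt Real.pi)⁻¹ *
        (w + l * (n : ℝ) ^ (1 - 1 / l ^ 2) * w ^ (1 / l ^ 2)))

open Set Real Topology

lemma integral_exp_neg_mul_Ioi_zero {b : ℝ} (hb : 0 < b) :
    ∫ w in Ioi (0 : ℝ), exp (-b * w) = b⁻¹ := by
  rw [integral_exp_mul_Ioi (neg_neg_iff_pos.2 hb)]
  simp

section DominatedConvergence

variable {c p : ℝ} {ι : Type*} {L : Filter ι} [L.IsCountablyGenerated] {a : ι → ℝ}

lemma tendsto_integral_exp_neg_mul_add_rpow (hc : 0 < c) (ha : ∀ i, 0 ≤ a i) {F : ℝ → ℝ}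
    (hF : ∀ w > 0, Tendsto (fun i => exp (-c * (w + a i * w ^ p))) L (𝓝 (F w))) :
    Tendsto (fun i => ∫ w in Ioi 0, exp (-c * (w + a i * w ^ p))) L
      (𝓝 (∫ w in Ioi 0, F w)) := by
  refine tendsto_integral_filter_of_dominated_convergence (fun w => exp (-c * w))
    (Eventually.of_forall fun i => (by fun_prop : Measurable _).aestronglyMeasurable)
    (Eventually.of_forall fun i => ?_) (exp_neg_integrableOn_Ioi 0 hc)
    ((ae_restrict_iff' measurableSet_Ioi).2 (Eventually.of_forall hF))
  filter_upwards [ae_restrict_mem measurableSet_Ioi] with w hw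
  have : 0 ≤ a i * w ^ p := mul_nonneg (ha i) (rpow_nonneg (le_of_lt hw) p)
  rw [norm_of_nonneg (exp_nonneg _), exp_le_exp]
  nlinarith

lemma tendsto_integral_exp_neg_mul_add_rpow_of_tendsto_zero (hc : 0 < c) (ha : ∀ i, 0 ≤ a i)
    (ha₀ : Tendsto a L (𝓝 0)) :
    Tendsto (fun i => ∫ w in Ioi 0, exp (-c * (w + a i * w ^ p))) L (𝓝 c⁻¹) := by
  rw [← integral_exp_neg_mul_Ioi_zero hc]
  refine tendsto_integral_exp_neg_mul_add_rpow hc ha fun w _ => ?_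
  have h := ((ha₀.mul_const (w ^ p)).const_add w).const_mul (-c)
  simpa [Function.comp_def] using (continuous_exp.tendsto _).comp h

lemma tendsto_integral_exp_neg_mul_add_rpow_of_tendsto_atTop (hc : 0 < c) (ha : ∀ i, 0 ≤ a i)
    (ha_top : Tendsto a L atTop) :
    Tendsto (fun i => ∫ w in Ioi 0, exp (-c * (w + a i * w ^ p))) L (𝓝 0) := by
  have hpointwise (w : ℝ) (hw : 0 < w) :
      Tendsto (fun i => exp (-c * (w + a i * w ^ p))) L (𝓝 0) := by
    have h := (tendsto_atTop_add_const_left _ w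
      (ha_top.atTop_mul_const (rpow_pos_of_pos hw p))).const_mul_atTop hc
    simpa only [neg_mul, Function.comp_def] using
      tendsto_exp_atBot.comp (tendsto_neg_atTop_atBot.comp h)
  simpa using tendsto_integral_exp_neg_mul_add_rpow (F := 0) hc ha hpointwise

end DominatedConvergence

/-- As `n → ∞`, the splitting probability converges to a Heaviside-type step function of
`λ`: it tends to `1` for `0 < λ < 1`, equals `1/2` for `λ = 1` (for every `n ≥ 1`), and
tends to `0` for `λ > 1`. -/
theorem stmt8 (l : ℝ) :
    (0 < l → l < 1 → Tendsto (fun n : ℕ => Sp l n) atTop (nhds 1)) ∧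
    (l = 1 → ∀ n : ℕ, 1 ≤ n → Sp l n = 1 / 2) ∧
    (1 < l → Tendsto (fun n : ℕ => Sp l n) atTop (nhds 0)) := by
  have hc : 0 < (√π)⁻¹ := by positivity
  have ha (hl : 0 < l) (n : ℕ) : 0 ≤ l * (n : ℝ) ^ (1 - 1 / l ^ 2) := by positivity
  refine ⟨fun hl₀ hl₁ => ?_, fun hl n _ => ?_, fun hl₁ => ?_⟩
  · have hexp : 0 < 1 / l ^ 2 - 1 := by
      rw [sub_pos, lt_div_iff₀ (by positivity)]
      nlinarith
    have hpow : Tendsto (fun n : ℕ => (n : ℝ) ^ (1 - 1 / l ^ 2)) atTop (𝓝 0) := by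
      simpa [neg_sub, Function.comp_def] using
        (tendsto_rpow_neg_atTop hexp).comp tendsto_natCast_atTop_atTop
    have h := (tendsto_integral_exp_neg_mul_add_rpow_of_tendsto_zero (p := 1 / l ^ 2) hc
      (ha hl₀) (by simpa using hpow.const_mul l)).const_mul (√π)⁻¹
    rwa [mul_inv_cancel₀ hc.ne'] at h
  · subst hl
    have hintegrand (w : ℝ) :
        -(√π)⁻¹ * (w + 1 * (n : ℝ) ^ (1 - 1 / (1 : ℝ) ^ 2) * w ^ (1 / (1 : ℝ) ^ 2)) =
          -(2 * (√π)⁻¹) * w := by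
      norm_num
      ring
    simp only [Sp, hintegrand, integral_exp_neg_mul_Ioi_zero (mul_pos two_pos hc)]
    field_simp
  · have hexp : 0 < 1 - 1 / l ^ 2 := by
      rw [sub_pos, div_lt_one (by positivity)]
      nlinarith
    have hl₀ : 0 < l := one_pos.trans hl₁
    have hpow : Tendsto (fun n : ℕ => (n : ℝ) ^ (1 - 1 / l ^ 2)) atTop atTop :=
      (tendsto_rpow_atTop hexp).comp tendsto_natCast_atTop_atTop
    have h := (tendsto_integral_exp_neg_mul_add_rpow_of_tendsto_atTop (p := 1 / l ^ 2) hc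
      (ha hl₀) (hpow.const_mul_atTop hl₀)).const_mul (√π)⁻¹
    rwa [mul_zero] at h
end

section
/- For every fixed λ with 0 < λ < 1, the quantity (1 − Sp(λ, n)) · (n/√π)^{1/λ² − 1} converges to λ · Γ(1 + 1/λ²) as n → ∞, where Γ is the Gamma function; equivalently, Sp(λ, n) = 1 − λ·Γ(1 + 1/λ²)·(√π/n)^{1/λ² − 1}·(1 + o(1)) as n → ∞. -/
open MeasureTheory Filter

open Set Real Topology

/-! With `b = π^(-1/2)`, `α = 1/λ²` and `ε = b λ n^(1-α) → 0⁺`, the identity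
`b ∫ e^(-bw) dw = 1` gives `1 - Sp(λ, n) = b ∫ e^(-bw) (1 - e^(-ε w^α)) dw`, and
`(n/√π)^(α-1) = b^α λ / ε`. Since `0 ≤ (1 - e^(-εx))/ε ≤ x`, dominated convergence lets `ε → 0⁺`
under the integral, leaving `b^(α+1) λ ∫ e^(-bw) w^α dw = λ Γ(α+1)`. -/

lemma tendsto_one_sub_exp_neg_mul_div (a : ℝ) :
    Tendsto (fun ε : ℝ => (1 - exp (-(ε * a))) / ε) (𝓝[≠] 0) (𝓝 a) := by
  have h : HasDerivAt (fun ε : ℝ => 1 - exp (-(ε * a))) a 0 := by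
    simpa using (((hasDerivAt_id (0 : ℝ)).mul_const a).neg.exp).const_sub 1
  simpa [div_eq_inv_mul] using h.tendsto_slope_zero

lemma abs_one_sub_exp_neg_mul_div_le {ε a : ℝ} (hε : 0 < ε) (ha : 0 ≤ a) :
    |(1 - exp (-(ε * a))) / ε| ≤ a := by
  have hexp : exp (-(ε * a)) ≤ 1 := exp_le_one_iff.mpr (by nlinarith)
  have hlin : 1 - exp (-(ε * a)) ≤ ε * a := by linarith [add_one_le_exp (-(ε * a))]
  rw [abs_of_nonneg (div_nonneg (by linarith) hε.le), div_le_iff₀ hε]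
  linarith

theorem tendsto_integral_mul_one_sub_exp_neg_mul_div {X : Type*} [MeasurableSpace X]
    {μ : Measure X} {f g : X → ℝ} (hf : AEStronglyMeasurable f μ)
    (hg : AEStronglyMeasurable g μ) (hg0 : 0 ≤ᵐ[μ] g)
    (hfg : Integrable (fun x => f x * g x) μ) :
    Tendsto (fun ε => ∫ x, f x * ((1 - exp (-(ε * g x))) / ε) ∂μ) (𝓝[>] 0)
      (𝓝 (∫ x, f x * g x ∂μ)) := by
  refine tendsto_integral_filter_of_dominated_convergence (fun x => ‖f x * g x‖) ?_ ?_
    hfg.norm ?_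
  · exact Eventually.of_forall fun ε => hf.mul <|
      (show Continuous fun y => (1 - exp (-(ε * y))) / ε by fun_prop).comp_aestronglyMeasurable hg
  · filter_upwards [self_mem_nhdsWithin] with ε (hε : 0 < ε)
    filter_upwards [hg0] with x hx
    rw [norm_mul, norm_mul, Real.norm_of_nonneg hx]
    exact mul_le_mul_of_nonneg_left (abs_one_sub_exp_neg_mul_div_le hε hx) (norm_nonneg _)
  · exact Eventually.of_forall fun x =>
      ((tendsto_one_sub_exp_neg_mul_div (g x)).mono_left
        (nhdsWithin_mono _ fun _ h => ne_of_gt h)).const_mul (f x)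

lemma integrableOn_exp_neg_mul_mul_rpow {b s : ℝ} (hb : 0 < b) (hs : -1 < s) :
    IntegrableOn (fun w => exp (-b * w) * w ^ s) (Ioi 0) :=
  (integrableOn_rpow_mul_exp_neg_mul_rpow hs one_pos hb).congr_fun
    (fun w _ => by simp only [rpow_one, mul_comm]) measurableSet_Ioi

lemma integral_exp_neg_mul_mul_rpow {b s : ℝ} (hb : 0 < b) (hs : -1 < s) :
    ∫ w in Ioi 0, exp (-b * w) * w ^ s = Gamma (s + 1) / b ^ (s + 1) := by
  have h := integral_rpow_mul_exp_neg_mul_Ioi (a := s + 1) (by linarith) hb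
  rw [add_sub_cancel_right, one_div, inv_rpow hb.le, ← div_eq_inv_mul] at h
  rw [← h]
  exact setIntegral_congr_fun measurableSet_Ioi fun w _ => by rw [neg_mul, mul_comm]

theorem tendsto_integral_exp_neg_mul_mul_one_sub_exp_neg_mul_rpow_div {b s : ℝ} (hb : 0 < b)
    (hs : -1 < s) :
    Tendsto (fun ε => ∫ w in Ioi 0, exp (-b * w) * ((1 - exp (-(ε * w ^ s))) / ε)) (𝓝[>] 0)
      (𝓝 (Gamma (s + 1) / b ^ (s + 1))) := by
  rw [← integral_exp_neg_mul_mul_rpow hb hs]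
  refine tendsto_integral_mul_one_sub_exp_neg_mul_div (by fun_prop) ?_ ?_
    (integrableOn_exp_neg_mul_mul_rpow hb hs)
  · exact (measurable_id.pow_const s).aestronglyMeasurable
  · filter_upwards [ae_restrict_mem measurableSet_Ioi] with w (hw : 0 < w)
    exact (rpow_pos_of_pos hw s).le

lemma mul_integral_exp_neg_mul_add_mul_rpow {b c s : ℝ} (hb : 0 < b) (hc : 0 ≤ c) :
    b * ∫ w in Ioi 0, exp (-b * (w + c * w ^ s))
      = 1 - b * ∫ w in Ioi 0, exp (-b * w) * (1 - exp (-(b * c * w ^ s))) := by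
  have hexp : IntegrableOn (fun w => exp (-b * w)) (Ioi 0) := exp_neg_integrableOn_Ioi 0 hb
  have hsplit : ∀ w, exp (-b * (w + c * w ^ s))
      = exp (-b * w) - exp (-b * w) * (1 - exp (-(b * c * w ^ s))) := fun w => by
    rw [mul_one_sub, sub_sub_cancel, ← exp_add]; ring_nf
  have hint : IntegrableOn (fun w => exp (-b * w) * (1 - exp (-(b * c * w ^ s)))) (Ioi 0) := by
    refine hexp.mono' (by fun_prop) ?_
    filter_upwards [ae_restrict_mem measurableSet_Ioi] with w (hw : 0 < w)
    have hexp_le : exp (-(b * c * w ^ s)) ≤ 1 :=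
      exp_le_one_iff.mpr (neg_nonpos.mpr (by positivity))
    rw [norm_mul, norm_of_nonneg (exp_pos _).le, norm_of_nonneg (by linarith)]
    exact mul_le_of_le_one_right (exp_pos _).le (by linarith [exp_pos (-(b * c * w ^ s))])
  have hone : ∫ w in Ioi 0, exp (-b * w) = b⁻¹ := by
    simpa [neg_mul] using integral_exp_mul_Ioi (neg_neg_of_pos hb) 0
  simp_rw [hsplit]
  rw [integral_sub hexp hint, hone, mul_sub, mul_inv_cancel₀ hb.ne']

lemma tendsto_const_mul_natCast_rpow_nhdsGT_zero {a p : ℝ} (ha : 0 < a) (hp : p < 0) :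
    Tendsto (fun n : ℕ => a * (n : ℝ) ^ p) atTop (𝓝[>] 0) := by
  refine tendsto_nhdsWithin_iff.mpr ⟨?_, ?_⟩
  · simpa using ((tendsto_rpow_neg_atTop (neg_pos.mpr hp)).comp
      tendsto_natCast_atTop_atTop).const_mul a
  · filter_upwards [eventually_gt_atTop 0] with n hn
    exact mul_pos ha (rpow_pos_of_pos (Nat.cast_pos.mpr hn) p)

/-- For fixed `0 < λ < 1`, `(1 - Sp(λ, n)) (n/√π)^(1/λ² - 1) → λ Γ(1 + 1/λ²)` as `n → ∞`,
i.e. `Sp(λ, n) = 1 - λ Γ(1 + 1/λ²) (√π/n)^(1/λ² - 1) (1 + o(1))`. -/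
theorem stmt9 (l : ℝ) (h0 : 0 < l) (h1 : l < 1) :
    Tendsto
      (fun n : ℕ => (1 - Sp l n) * ((n : ℝ) / Real.sqrt Real.pi) ^ (1 / l ^ 2 - 1))
      atTop (nhds (l * Real.Gamma (1 + 1 / l ^ 2))) := by
  set b := (√π)⁻¹
  have hb : 0 < b := by positivity
  set α := 1 / l ^ 2 with hα_def
  have hα : 1 < α := by rw [lt_div_iff₀ (by positivity)]; nlinarith
  set ε : ℕ → ℝ := fun n => b * l * (n : ℝ) ^ (1 - α)
  have hε : Tendsto ε atTop (𝓝[>] 0) :=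
    tendsto_const_mul_natCast_rpow_nhdsGT_zero (by positivity) (by linarith)
  have hquot : ∀ᶠ n : ℕ in atTop,
      b ^ (α + 1) * l * ∫ w in Ioi 0, exp (-b * w) * ((1 - exp (-(ε n * w ^ α))) / ε n)
        = (1 - Sp l n) * ((n : ℝ) / √π) ^ (α - 1) := by
    filter_upwards [eventually_gt_atTop 0] with n hn
    have hn : (0 : ℝ) < n := Nat.cast_pos.mpr hn
    have hn' : (n : ℝ) ^ (α - 1) * n ^ (1 - α) = 1 := by rw [← rpow_add hn]; simp
    have hb' : b ^ (α + 1) = b ^ (α - 1) * b ^ 2 := by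
      rw [← rpow_natCast, ← rpow_add hb]; ring_nf
    simp_rw [← mul_div_assoc]
    rw [integral_div, Sp, ← hα_def, mul_integral_exp_neg_mul_add_mul_rpow hb (by positivity),
      sub_sub_cancel, div_eq_mul_inv _ √π, mul_rpow hn.le hb.le, hb']
    simp only [ε]
    field_simp
    rw [mul_comm _ ((n : ℝ) ^ (α - 1)), ← mul_assoc, hn', one_mul]
  have hlim := ((tendsto_integral_exp_neg_mul_mul_one_sub_exp_neg_mul_rpow_div hb
    (s := α) (by linarith)).comp hε).const_mul (b ^ (α + 1) * l)
  have hval : b ^ (α + 1) * l * (Gamma (α + 1) / b ^ (α + 1)) = l * Gamma (1 + α) := by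
    rw [add_comm α]; field_simp
  rw [hval] at hlim
  exact hlim.congr' hquot
end

section
/- For every fixed λ > 1, the quantity Sp(λ, n) · (nλ/√π)^{λ² − 1} converges to λ · Γ(λ²) as n → ∞, where Γ is the Gamma function; equivalently, Sp(λ, n) = λ·Γ(λ²)·(√π/(nλ))^{λ² − 1}·(1 + o(1)) as n → ∞. -/
/-!
With `p = λ²` and `aₙ = λ n^(1 - 1/p) / √π`, the substitution `w = (t / aₙ)^p` turns the
exponent `w + λ n^(1 - 1/p) w^(1/p)` (times `π^(-1/2)`) into `π^(-1/2) (t / aₙ)^p + t`, so that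
`Sp(λ, n) = π^(-1/2) p aₙ^(-p) ∫₀^∞ exp(-π^(-1/2) (t / aₙ)^p) e^(-t) t^(p-1) dt`,
and the prefactor times `(nλ/√π)^(p-1)` is exactly `λ`. Since `λ > 1`, `aₙ → ∞`, so the damping
factor increases to `1` and dominated convergence by the Gamma integrand gives `Γ(p)`.
-/
open MeasureTheory Filter

open Set Real Topology

theorem integral_comp_div_rpow_Ioi {E : Type*} [NormedAddCommGroup E] [NormedSpace ℝ E]
    (g : ℝ → E) {a p : ℝ} (ha : 0 < a) (hp : 0 < p) :
    ∫ t in Ioi 0, (p * a ^ (-p) * t ^ (p - 1)) • g ((t / a) ^ p) = ∫ w in Ioi 0, g w := by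
  have hscale := integral_comp_mul_left_Ioi
    (fun x => (p * x ^ (p - 1)) • g (x ^ p)) 0 (inv_pos.mpr ha)
  rw [mul_zero, inv_inv] at hscale
  rw [← integral_comp_rpow_Ioi_of_pos (g := g) hp,
    ← inv_smul_smul₀ ha.ne' (∫ x in Ioi 0, (p * x ^ (p - 1)) • g (x ^ p)), ← hscale,
    ← integral_smul]
  refine setIntegral_congr_fun measurableSet_Ioi fun t (ht : 0 < t) => ?_
  simp only [smul_smul, inv_mul_eq_div]
  congr 1
  rw [div_rpow ht.le ha.le, rpow_neg ha.le, rpow_sub_one ha.ne']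
  field_simp

theorem mul_rpow_one_sub_one_div_rpow {x y p : ℝ} (hx : 0 < x) (hy : 0 ≤ y) (hp : p ≠ 0) :
    (x * y ^ (1 - 1 / p)) ^ p = x * (x * y) ^ (p - 1) := by
  rw [mul_rpow hx.le (rpow_nonneg hy _), ← rpow_mul hy, mul_rpow hx.le hy,
    rpow_sub_one hx.ne', show (1 - 1 / p) * p = p - 1 by field_simp]
  field_simp

theorem tendsto_integral_exp_neg_mul_div_rpow_mul_Gamma_integrand {ι : Type*} {L : Filter ι}
    [L.IsCountablyGenerated] {c p : ℝ} (hc : 0 ≤ c) (hp : 0 < p) {a : ι → ℝ}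
    (ha : Tendsto a L atTop) :
    Tendsto (fun i => ∫ t in Ioi 0, exp (-(c * (t / a i) ^ p)) * (exp (-t) * t ^ (p - 1)))
      L (𝓝 (Gamma p)) := by
  have hGamma := GammaIntegral_convergent hp
  rw [Gamma_eq_integral hp]
  refine tendsto_integral_filter_of_dominated_convergence _ ?_ ?_ hGamma ?_
  · refine Eventually.of_forall fun i => ?_
    have : Continuous fun t => exp (-(c * (t / a i) ^ p)) := by
      fun_prop (disch := exact hp.le)
    exact this.aestronglyMeasurable.mul hGamma.aestronglyMeasurable
  · filter_upwards [ha.eventually_ge_atTop 0] with i hai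
    filter_upwards [ae_restrict_mem measurableSet_Ioi] with t (ht : 0 < t)
    have hdamp : exp (-(c * (t / a i) ^ p)) ≤ 1 :=
      exp_le_one_iff.mpr (neg_nonpos.mpr (mul_nonneg hc (rpow_nonneg (div_nonneg ht.le hai) p)))
    rw [norm_of_nonneg (by positivity)]
    exact mul_le_of_le_one_left (by positivity) hdamp
  · refine Eventually.of_forall fun t => ?_
    have hpow : Tendsto (fun i => (t / a i) ^ p) L (𝓝 0) := by
      simpa [zero_rpow hp.ne', Function.comp_def] using
        ((continuousAt_rpow_const 0 p (Or.inr hp.le)).tendsto).comp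
          (tendsto_const_nhds.div_atTop ha)
    have hdamp : Tendsto (fun i => exp (-(c * (t / a i) ^ p))) L (𝓝 1) := by
      simpa [Function.comp_def] using (continuous_exp.tendsto 0).comp
        (by simpa using (hpow.const_mul c).neg)
    simpa using hdamp.mul_const (exp (-t) * t ^ (p - 1))

noncomputable def spScale (l : ℝ) (n : ℕ) : ℝ := l / √π * (n : ℝ) ^ (1 - 1 / l ^ 2)

theorem spScale_pos {l : ℝ} (hl : 0 < l) {n : ℕ} (hn : 0 < n) : 0 < spScale l n := by
  unfold spScale; positivity

theorem Sp_mul_rpow_eq {l : ℝ} (hl : 0 < l) {n : ℕ} (hn : 0 < n) :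
    Sp l n * ((n : ℝ) * l / √π) ^ (l ^ 2 - 1) =
      l * ∫ t in Ioi 0, exp (-((√π)⁻¹ * (t / spScale l n) ^ l ^ 2)) *
        (exp (-t) * t ^ (l ^ 2 - 1)) := by
  set p := l ^ 2
  set a := spScale l n
  have hp : 0 < p := by positivity
  have hx : 0 < l / √π := by positivity
  have ha : 0 < a := spScale_pos hl hn
  have ha_def : a = l / √π * (n : ℝ) ^ (1 - 1 / p) := rfl
  have hsubst : ∫ w in Ioi 0, exp (-(√π)⁻¹ * (w + l * (n : ℝ) ^ (1 - 1 / p) * w ^ (1 / p))) =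
      p * a ^ (-p) * ∫ t in Ioi 0, exp (-((√π)⁻¹ * (t / a) ^ p)) * (exp (-t) * t ^ (p - 1)) := by
    rw [← integral_comp_div_rpow_Ioi (E := ℝ) _ ha hp, ← integral_const_mul]
    refine setIntegral_congr_fun measurableSet_Ioi fun t (ht : 0 < t) => ?_
    have hroot : ((t / a) ^ p) ^ (1 / p) = t / a := by
      rw [← rpow_mul (div_pos ht ha).le, mul_one_div_cancel hp.ne', rpow_one]
    have hlinear : (√π)⁻¹ * (l * (n : ℝ) ^ (1 - 1 / p) * (t / a)) = t := by
      rw [ha_def]; field_simp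
    rw [smul_eq_mul, hroot, show -(√π)⁻¹ * ((t / a) ^ p + l * (n : ℝ) ^ (1 - 1 / p) * (t / a)) =
      -((√π)⁻¹ * (t / a) ^ p) + -t by linear_combination -hlinear, exp_add]
    ring
  have hconst : (√π)⁻¹ * (p * a ^ (-p)) * ((n : ℝ) * l / √π) ^ (p - 1) = l := by
    rw [rpow_neg ha.le, ha_def, mul_rpow_one_sub_one_div_rpow hx n.cast_nonneg hp.ne',
      show (n : ℝ) * l / √π = l / √π * n by ring]
    field_simp
    rfl
  rw [Sp, hsubst]
  linear_combination (∫ t in Ioi 0, exp (-((√π)⁻¹ * (t / a) ^ p)) *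
    (exp (-t) * t ^ (p - 1))) * hconst

theorem tendsto_spScale_atTop {l : ℝ} (hl : 1 < l) : Tendsto (spScale l) atTop atTop := by
  have hexp : 0 < 1 - 1 / l ^ 2 := by
    rw [sub_pos, div_lt_one (by positivity)]
    nlinarith
  exact ((tendsto_rpow_atTop hexp).comp tendsto_natCast_atTop_atTop).const_mul_atTop
    (by positivity)

/-- For fixed `λ > 1`, `Sp(λ, n) (nλ/√π)^(λ² - 1) → λ Γ(λ²)` as `n → ∞`,
i.e. `Sp(λ, n) = λ Γ(λ²) (√π/(nλ))^(λ² - 1) (1 + o(1))`. -/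
theorem stmt10 (l : ℝ) (h1 : 1 < l) :
    Tendsto
      (fun n : ℕ => Sp l n * ((n : ℝ) * l / Real.sqrt Real.pi) ^ (l ^ 2 - 1))
      atTop (nhds (l * Real.Gamma (l ^ 2))) := by
  have hl : 0 < l := by linarith
  have hlimit := tendsto_integral_exp_neg_mul_div_rpow_mul_Gamma_integrand
    (p := l ^ 2) (inv_nonneg.mpr (sqrt_nonneg π)) (by positivity) (tendsto_spScale_atTop h1)
  refine (hlimit.const_mul l).congr' ?_
  filter_upwards [eventually_gt_atTop 0] with n hn
  exact (Sp_mul_rpow_eq hl hn).symm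
end

section
/- Slow-emission scaling limit of the mean fastest arrival time integral: lim_{a → 0⁺} a^{4/5} · ∫_0^∞ exp( −a² · u^{5/2} · e^{−1/u} ) du = (2/5)·Γ(2/5), where Γ is the Gamma function. Equivalently, after the substitution u = v / a^{4/5}, the integral ∫_0^∞ exp( −v^{5/2}·exp(−a^{4/5}/v) ) dv converges to ∫_0^∞ exp(−v^{5/2}) dv = (2/5)·Γ(2/5) as a → 0⁺. -/
open MeasureTheory Filter

/-!
The substitution `u = v / c` with `c = a^(4/5)` turns `a^(4/5)` times the first integral into
`∫₀^∞ exp(-v^(5/2) e^(-c/v)) dv`. For `c ≤ 1` its integrand is dominated by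
`exp(1 - v^(5/2)/e)`: for `v ≥ 1` because `e^(-c/v) ≥ e^(-1)`, for `v ≤ 1` because the right side
is at least `1`. Dominated convergence then lets `c → 0`, and the limit
`∫₀^∞ exp(-v^(5/2)) dv = Γ(7/5) = (2/5) Γ(2/5)`.
-/

open Real Set Topology

lemma integral_exp_neg_rpow_five_halves :
    ∫ v in Ioi (0 : ℝ), exp (-v ^ ((5 : ℝ) / 2)) = 2 / 5 * Gamma (2 / 5) := by
  rw [integral_exp_neg_rpow (by norm_num), show (1 : ℝ) / (5 / 2) = 2 / 5 by norm_num,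
    Gamma_add_one (by norm_num)]

lemma neg_rpow_mul_exp_neg_div_le {p c v : ℝ} (hp : 0 ≤ p) (hc : c ≤ 1) (hv : 0 < v) :
    -v ^ p * exp (-c / v) ≤ 1 - exp (-1) * v ^ p := by
  have hvp : 0 ≤ v ^ p := rpow_nonneg hv.le p
  rcases le_or_gt v 1 with hv₁ | hv₁
  · have : exp (-1) * v ^ p ≤ 1 :=
      mul_le_one₀ (exp_le_one_iff.2 (by norm_num)) hvp (rpow_le_one hv.le hv₁ hp)
    nlinarith [exp_pos (-c / v)]
  · have : exp (-1) ≤ exp (-c / v) := by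
      rw [exp_le_exp, neg_div, neg_le_neg_iff, div_le_one hv]
      linarith
    nlinarith

lemma tendsto_integral_exp_neg_rpow_mul_exp_neg_div {p : ℝ} (hp : 0 < p) :
    Tendsto (fun c : ℝ => ∫ v in Ioi (0 : ℝ), exp (-v ^ p * exp (-c / v))) (𝓝 0)
      (𝓝 (∫ v in Ioi (0 : ℝ), exp (-v ^ p))) := by
  refine tendsto_integral_filter_of_dominated_convergence
    (fun v => exp 1 * exp (-exp (-1) * v ^ p)) ?_ ?_ ?_ ?_
  · exact Eventually.of_forall fun c => (Measurable.aestronglyMeasurable (by fun_prop)).restrict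
  · filter_upwards [Iio_mem_nhds (zero_lt_one' ℝ)] with c (hc : c < 1)
    filter_upwards [ae_restrict_mem measurableSet_Ioi] with v hv
    rw [norm_of_nonneg (exp_pos _).le, ← exp_add, exp_le_exp]
    linarith [neg_rpow_mul_exp_neg_div_le hp.le hc.le hv]
  · simpa using (integrableOn_rpow_mul_exp_neg_mul_rpow (s := 0) (by norm_num) hp
      (exp_pos (-1))).const_mul (exp 1)
  · refine Eventually.of_forall fun v => ?_
    have hcont : Continuous fun c : ℝ => exp (-v ^ p * exp (-c / v)) := by fun_prop
    simpa using hcont.tendsto 0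

lemma mul_integral_exp_neg_rpow_mul_exp_neg_inv {p c : ℝ} (hc : 0 < c) :
    c * ∫ u in Ioi (0 : ℝ), exp (-(c ^ p) * u ^ p * exp (-1 / u)) =
      ∫ v in Ioi (0 : ℝ), exp (-v ^ p * exp (-c / v)) := by
  have hsub := integral_comp_mul_left_Ioi' (fun v : ℝ => exp (-v ^ p * exp (-c / v))) 0 hc
  rw [mul_zero, smul_eq_mul] at hsub
  rw [← hsub]
  congr 1
  refine setIntegral_congr_fun measurableSet_Ioi fun u (hu : 0 < u) => ?_
  rw [mul_rpow hc.le hu.le, show -c / (c * u) = -1 / u by field_simp, neg_mul]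

/-- Slow-emission scaling limit of the mean fastest arrival time integral:
`a^(4/5) ∫_0^∞ exp(-a² u^(5/2) e^(-1/u)) du → (2/5) Γ(2/5)` as `a → 0⁺`; equivalently,
after the substitution `u = v / a^(4/5)`,
`∫_0^∞ exp(-v^(5/2) exp(-a^(4/5)/v)) dv → ∫_0^∞ exp(-v^(5/2)) dv = (2/5) Γ(2/5)`. -/
theorem stmt13 :
    Tendsto
      (fun a : ℝ => a ^ ((4 : ℝ) / 5) *
        ∫ u in Set.Ioi (0 : ℝ),
          Real.exp (-(a ^ 2) * u ^ ((5 : ℝ) / 2) * Real.exp (-1 / u)))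
      (nhdsWithin 0 (Set.Ioi 0)) (nhds ((2 / 5) * Real.Gamma (2 / 5))) ∧
    Tendsto
      (fun a : ℝ => ∫ v in Set.Ioi (0 : ℝ),
          Real.exp (-v ^ ((5 : ℝ) / 2) * Real.exp (-(a ^ ((4 : ℝ) / 5)) / v)))
      (nhdsWithin 0 (Set.Ioi 0)) (nhds ((2 / 5) * Real.Gamma (2 / 5))) ∧
    ∫ v in Set.Ioi (0 : ℝ), Real.exp (-v ^ ((5 : ℝ) / 2)) =
      (2 / 5) * Real.Gamma (2 / 5) := by
  have hlim : Tendsto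
      (fun a : ℝ => ∫ v in Ioi (0 : ℝ), exp (-v ^ ((5 : ℝ) / 2) * exp (-(a ^ ((4 : ℝ) / 5)) / v)))
      (𝓝[>] 0) (𝓝 (2 / 5 * Gamma (2 / 5))) := by
    rw [← integral_exp_neg_rpow_five_halves]
    exact (tendsto_integral_exp_neg_rpow_mul_exp_neg_div (by norm_num)).comp
      (((continuous_rpow_const (by norm_num)).tendsto' 0 0 (zero_rpow (by norm_num))).mono_left
        nhdsWithin_le_nhds)
  refine ⟨hlim.congr' ?_, hlim, integral_exp_neg_rpow_five_halves⟩
  filter_upwards [self_mem_nhdsWithin] with a (ha : 0 < a)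
  have hpow : a ^ 2 = (a ^ ((4 : ℝ) / 5)) ^ ((5 : ℝ) / 2) := by
    rw [← rpow_mul ha.le, ← rpow_natCast]
    norm_num
  rw [hpow, mul_integral_exp_neg_rpow_mul_exp_neg_inv (rpow_pos_of_pos ha _)]
end
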